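/- For every integer r ≥ 3 there exists N such that for all n ≥ N the following holds: for every nonempty X ⊆ [2,n] with X ⊄ [2,r+1], and for every MLCIF 𝒜 ∈ ⋃_{j=2}^{r+1} I_j, we have hit_X(𝒮) > hit_X(𝒜). -/

import Mathlib

open Finset

/-- The family of all `r`-element subsets of `[n] = {1, …, n}`. -/
def chooseFam (n r : ℕ) : Finset (Finset ℕ) := (Finset.Icc 1 n).powersetCard r

/-- A family of sets is intersecting if any two members meet. -/
def IntersectingFam (𝒜 : Finset (Finset ℕ)) : Prop :=
  ∀ A ∈ 𝒜, ∀ B ∈ 𝒜, (A ∩ B).Nonempty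

/-- `DomLE B A` : writing the elements in increasing order, the `i`-th element
of `B` is at most the `i`-th element of `A` (and they have the same size). -/
def DomLE (B A : Finset ℕ) : Prop :=
  B.card = A.card ∧
  ∀ (i : ℕ) (hB : i < (B.sort (· ≤ ·)).length) (hA : i < (A.sort (· ≤ ·)).length),
    (B.sort (· ≤ ·)).get ⟨i, hB⟩ ≤ (A.sort (· ≤ ·)).get ⟨i, hA⟩

/-- A family of `r`-subsets of `[n]` is left-compressed if it is downward closed
under the domination order. -/
def LeftCompressed (n r : ℕ) (𝒜 : Finset (Finset ℕ)) : Prop :=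
  ∀ A ∈ 𝒜, ∀ B ∈ chooseFam n r, DomLE B A → B ∈ 𝒜

/-- A left-compressed intersecting family in `([n] choose r)`. -/
def IsLCIF (n r : ℕ) (𝒜 : Finset (Finset ℕ)) : Prop :=
  𝒜 ⊆ chooseFam n r ∧ IntersectingFam 𝒜 ∧ LeftCompressed n r 𝒜

/-- A maximal left-compressed intersecting family. -/
def IsMLCIF (n r : ℕ) (𝒜 : Finset (Finset ℕ)) : Prop :=
  IsLCIF n r 𝒜 ∧ ∀ ℬ : Finset (Finset ℕ), IsLCIF n r ℬ → 𝒜 ⊆ ℬ → ℬ = 𝒜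

/-- The number of members of `𝒜` hitting `X`. -/
def hit (X : Finset ℕ) (𝒜 : Finset (Finset ℕ)) : ℕ :=
  (𝒜.filter fun A => (A ∩ X).Nonempty).card

/-- An MLCIF optimal for `X`: it maximises `hit X` among all MLCIFs. -/
def OptimalMLCIF (n r : ℕ) (X : Finset ℕ) (𝒜 : Finset (Finset ℕ)) : Prop :=
  IsMLCIF n r 𝒜 ∧ ∀ ℬ : Finset (Finset ℕ), IsMLCIF n r ℬ → hit X ℬ ≤ hit X 𝒜

/-- An LCIF optimal for `X` among all LCIFs. -/
def OptimalLCIF (n r : ℕ) (X : Finset ℕ) (𝒜 : Finset (Finset ℕ)) : Prop :=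
  IsLCIF n r 𝒜 ∧ ∀ ℬ : Finset (Finset ℕ), IsLCIF n r ℬ → hit X ℬ ≤ hit X 𝒜

/-- The `t`-adjusted Hilton–Milner family. -/
def AHM (n r t : ℕ) : Finset (Finset ℕ) :=
  (chooseFam n r).filter fun A =>
    (1 ∈ A ∧ (A ∩ Finset.Icc 2 t).Nonempty) ∨ Finset.Icc 2 t ⊆ A

/-- The star: all `r`-subsets of `[n]` containing `1`. -/
def starFam (n r : ℕ) : Finset (Finset ℕ) :=
  (chooseFam n r).filter fun A => 1 ∈ A

/-- `G ⊆ [n]` is a potential generator of `𝒜`: every `A ∈ ([n] choose r)`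
containing `G` lies in `𝒜`. -/
def PotGen (n r : ℕ) (𝒜 : Finset (Finset ℕ)) (G : Finset ℕ) : Prop :=
  G ⊆ Finset.Icc 1 n ∧ ∀ A ∈ chooseFam n r, G ⊆ A → A ∈ 𝒜

open Classical in
/-- The canonical generating family: all inclusion-minimal potential generators. -/
noncomputable def canonGen (n r : ℕ) (𝒜 : Finset (Finset ℕ)) : Finset (Finset ℕ) :=
  (Finset.Icc 1 n).powerset.filter fun G =>
    PotGen n r 𝒜 G ∧ ∀ G' ⊆ G, PotGen n r 𝒜 G' → G' = G

/-- The rank of `𝒜`: the smallest size of a generator. -/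
noncomputable def rankFam (n r : ℕ) (𝒜 : Finset (Finset ℕ)) : ℕ :=
  sInf {k : ℕ | ∃ G ∈ canonGen n r 𝒜, G.card = k}

/-- The family generated by `𝒢` with respect to `n` and `r`. -/
def genFam (n r : ℕ) (𝒢 : Finset (Finset ℕ)) : Finset (Finset ℕ) :=
  (chooseFam n r).filter fun A => ∃ G ∈ 𝒢, G ⊆ A

/-- `𝒜 ∈ I_j`: an MLCIF of rank two whose generators of size two are precisely
`{1,2}, {1,3}, …, {1,j}`. -/
noncomputable def MemI (n r j : ℕ) (𝒜 : Finset (Finset ℕ)) : Prop :=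
  IsMLCIF n r 𝒜 ∧ rankFam n r 𝒜 = 2 ∧
    (canonGen n r 𝒜).filter (fun G => G.card = 2) =
      (Finset.Icc 2 j).image fun i => ({1, i} : Finset ℕ)

/-!
A member of `𝒜` avoiding `1` with at most two points in `[1, 2r + 1]` compresses to
`{2, 3} ∪ [2r + 2, 3r - 1]`, which in turn compresses to every `P ∪ D` with `P` a pair in
`{1, 2, 3}` and `D ⊆ [4, 2r + 1]`. Such a set can be chosen disjoint from any member of `𝒜` that
meets `{1, 2, 3}` at most once, so every member meets it twice and maximality makes `{2, 3}` a
generator, which `I_j` forbids. Hence every set of `𝒜 \ 𝒮` has three points in `[1, 2r + 1]`, and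
`|𝒜 \ 𝒮| ≤ C(2r + 1, 3) C(n, r - 3)`. On the other hand `[2, r + 1] ∈ 𝒜` by compression, so for
`x₀ ∈ X \ [2, r + 1]` the `C(n - r - 2, r - 2)` star sets `{1, x₀} ∪ S` with `S` avoiding
`[1, r + 1] ∪ {x₀}` hit `X` but miss `𝒜`; for large `n` they outnumber `𝒜 \ 𝒮`.
-/

def countLE (A : Finset ℕ) (k : ℕ) : ℕ := #{x ∈ A | x ≤ k}

theorem Monotone.lt_card_filter_le_iff {α : Type*} [LinearOrder α] {t : ℕ} {f : Fin t → α}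
    (hf : Monotone f) (i : Fin t) (k : α) : (i : ℕ) < #{j | f j ≤ k} ↔ f i ≤ k := by
  constructor
  · intro hi
    by_contra! hk
    have hsub : ({j | f j ≤ k} : Finset (Fin t)) ⊆ Iio i := by
      intro j hj
      simp only [mem_filter, mem_univ, true_and] at hj
      exact mem_Iio.2 (lt_of_not_ge fun hij => (hk.trans_le (hf hij)).not_ge hj)
    have := card_le_card hsub
    rw [Fin.card_Iio] at this
    omega
  · intro hk
    have hsub : Iic i ⊆ ({j | f j ≤ k} : Finset (Fin t)) := by
      intro j hj
      simp only [mem_filter, mem_univ, true_and]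
      exact (hf (mem_Iic.1 hj)).trans hk
    have := card_le_card hsub
    rw [Fin.card_Iic] at this
    omega

lemma sort_getElem_le_iff (s : Finset ℕ) {i : ℕ} (hi : i < (s.sort (· ≤ ·)).length) (k : ℕ) :
    (s.sort (· ≤ ·))[i] ≤ k ↔ i < countLE s k := by
  set e := s.orderEmbOfFin rfl
  have hcount : countLE s k = #{j | e j ≤ k} := by
    conv_lhs => rw [countLE, ← s.map_orderEmbOfFin_univ rfl, filter_map, card_map]
    rfl
  rw [hcount]
  exact (e.monotone.lt_card_filter_le_iff ⟨i, by simpa using hi⟩ k).symm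

lemma domLE_iff {B A : Finset ℕ} :
    DomLE B A ↔ #B = #A ∧ ∀ k, countLE A k ≤ countLE B k := by
  refine and_congr_right fun hcard => ⟨fun h k => ?_, fun h i hB hA => ?_⟩
  · by_contra! hlt
    have hA : countLE B k < (A.sort (· ≤ ·)).length := by
      rw [length_sort]; exact hlt.trans_le (card_filter_le _ _)
    have hB : countLE B k < (B.sort (· ≤ ·)).length := by
      rw [length_sort, hcard]; rwa [length_sort] at hA
    have := h _ hB hA
    simp only [List.get_eq_getElem] at this
    have h1 := (sort_getElem_le_iff A hA k).2 hlt
    exact (lt_irrefl _) ((sort_getElem_le_iff B hB k).1 (this.trans h1))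
  · simp only [List.get_eq_getElem]
    exact (sort_getElem_le_iff B hB _).2 ((sort_getElem_le_iff A hA _).1 le_rfl |>.trans_le (h _))

lemma countLE_union {A B : Finset ℕ} (h : Disjoint A B) (k : ℕ) :
    countLE (A ∪ B) k = countLE A k + countLE B k := by
  rw [countLE, filter_union, card_union_of_disjoint (disjoint_filter_filter h)]
  rfl

lemma DomLE.union {B₁ B₂ A₁ A₂ : Finset ℕ} (h₁ : DomLE B₁ A₁) (h₂ : DomLE B₂ A₂)
    (hB : Disjoint B₁ B₂) (hA : Disjoint A₁ A₂) : DomLE (B₁ ∪ B₂) (A₁ ∪ A₂) := by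
  rw [domLE_iff] at *
  refine ⟨by rw [card_union_of_disjoint hB, card_union_of_disjoint hA, h₁.1, h₂.1],
    fun k => ?_⟩
  rw [countLE_union hB, countLE_union hA]
  exact add_le_add (h₁.2 k) (h₂.2 k)

lemma domLE_of_forall_le {B A : Finset ℕ} (hcard : #B = #A) (h : ∀ b ∈ B, ∀ a ∈ A, b ≤ a) :
    DomLE B A := by
  refine domLE_iff.2 ⟨hcard, fun k => ?_⟩
  by_cases hk : ∃ a ∈ A, a ≤ k
  · obtain ⟨a, ha, hak⟩ := hk
    rw [countLE, countLE, filter_true_of_mem fun b hb => (h b hb a ha).trans hak, hcard]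
    exact card_filter_le _ _
  · push Not at hk
    rw [countLE, filter_false_of_mem fun a ha => (hk a ha).not_ge]
    exact Nat.zero_le _

lemma domLE_Ioc_of_lt {A : Finset ℕ} {m : ℕ} (hA : ∀ a ∈ A, m < a) :
    DomLE (Ioc m (m + #A)) A := by
  refine domLE_iff.2 ⟨by rw [Nat.card_Ioc]; omega, fun k => ?_⟩
  have hIoc : countLE (Ioc m (m + #A)) k = min (m + #A) k - m := by
    rw [countLE, ← Nat.card_Ioc]
    congr 1
    ext x
    simp only [mem_filter, mem_Ioc]
    omega
  have hle : countLE A k ≤ k - m := by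
    rw [← Nat.card_Ioc]
    exact card_le_card fun x hx => by
      simp only [mem_filter, mem_Ioc] at hx ⊢
      exact ⟨hA x hx.1, hx.2⟩
  have := card_filter_le A (· ≤ k)
  rw [hIoc]
  unfold countLE at *
  omega

lemma domLE_Ioc_of_le {A : Finset ℕ} {c : ℕ} (hA : ∀ a ∈ A, a ≤ c) (hc : #A ≤ c) :
    DomLE A (Ioc (c - #A) c) := by
  refine domLE_iff.2 ⟨by rw [Nat.card_Ioc]; omega, fun k => ?_⟩
  have hIoc : countLE (Ioc (c - #A) c) k = min c k - (c - #A) := by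
    rw [countLE, ← Nat.card_Ioc (c - #A)]
    congr 1
    ext x
    simp only [mem_filter, mem_Ioc]
    omega
  have hgt : #{x ∈ A | ¬ x ≤ k} ≤ c - k := by
    rw [← Nat.card_Ioc]
    exact card_le_card fun x hx => by
      simp only [mem_filter, mem_Ioc] at hx ⊢
      exact ⟨by omega, hA x hx.1⟩
  have := card_filter_add_card_filter_not (s := A) (· ≤ k)
  rw [hIoc]
  unfold countLE
  omega

lemma DomLE.one_mem {A B : Finset ℕ} (h : DomLE B A) (hA : 1 ∈ A) (hB : 0 ∉ B) : 1 ∈ B := by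
  have hpos : 0 < countLE B 1 :=
    lt_of_lt_of_le (card_pos.2 ⟨1, by simp [hA]⟩) ((domLE_iff.1 h).2 1)
  obtain ⟨x, hx⟩ := card_pos.1 hpos
  rw [mem_filter] at hx
  obtain rfl : x = 1 := by
    have : x ≠ 0 := fun h0 => hB (h0 ▸ hx.1)
    omega
  exact hx.1

lemma mem_chooseFam {n r : ℕ} {A : Finset ℕ} : A ∈ chooseFam n r ↔ A ⊆ Icc 1 n ∧ #A = r :=
  mem_powersetCard

lemma zero_notMem_of_mem_chooseFam {n r : ℕ} {A : Finset ℕ} (hA : A ∈ chooseFam n r) : 0 ∉ A :=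
  fun h0 => by simpa using (mem_chooseFam.1 hA).1 h0

lemma starFam_isLCIF (n r : ℕ) : IsLCIF n r (starFam n r) := by
  refine ⟨filter_subset _ _, fun A hA B hB => ?_, fun A hA B hB hBA => ?_⟩
  · exact ⟨1, mem_inter.2 ⟨(mem_filter.1 hA).2, (mem_filter.1 hB).2⟩⟩
  · exact mem_filter.2 ⟨hB, hBA.one_mem (mem_filter.1 hA).2 (zero_notMem_of_mem_chooseFam hB)⟩

def twoOfThreeFam (n r : ℕ) : Finset (Finset ℕ) := {A ∈ chooseFam n r | 2 ≤ countLE A 3}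

lemma twoOfThreeFam_isLCIF (n r : ℕ) : IsLCIF n r (twoOfThreeFam n r) := by
  refine ⟨filter_subset _ _, fun A hA B hB => ?_, fun A hA B hB hBA => ?_⟩
  · rw [twoOfThreeFam, mem_filter] at hA hB
    have hsub : ∀ C ∈ chooseFam n r, {x ∈ C | x ≤ 3} ⊆ Icc 1 3 := fun C hC x hx => by
      have := (mem_chooseFam.1 hC).1 (mem_filter.1 hx).1
      simp only [mem_Icc, mem_filter] at this hx ⊢
      omega
    obtain ⟨x, hx⟩ := inter_nonempty_of_card_lt_card_add_card (hsub A hA.1) (hsub B hB.1)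
      (by simp only [Nat.card_Icc]; exact lt_of_lt_of_le (by norm_num) (add_le_add hA.2 hB.2))
    simp only [mem_inter, mem_filter] at hx
    exact ⟨x, mem_inter.2 ⟨hx.1.1, hx.2.1⟩⟩
  · rw [twoOfThreeFam, mem_filter] at hA ⊢
    exact ⟨hB, hA.2.trans ((domLE_iff.1 hBA).2 3)⟩

section Generators

variable {n r : ℕ} {𝒜 : Finset (Finset ℕ)}

lemma not_potGen_empty (hn : 2 * r ≤ n) (h𝒜 : IntersectingFam 𝒜) : ¬ PotGen n r 𝒜 ∅ := by
  rintro ⟨-, h⟩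
  have hmem : ∀ m, m + r ≤ n → Ioc m (m + r) ∈ 𝒜 := fun m hm =>
    h _ (mem_chooseFam.2 ⟨fun x hx => by simp only [mem_Ioc, mem_Icc] at hx ⊢; omega, by simp⟩)
      (empty_subset _)
  obtain ⟨x, hx⟩ := h𝒜 _ (hmem 0 (by omega)) _ (hmem r (by omega))
  simp only [mem_inter, mem_Ioc] at hx
  omega

lemma two_le_card_of_potGen (hn : 2 * r ≤ n) (h𝒜 : IntersectingFam 𝒜)
    (hrank : 2 ≤ rankFam n r 𝒜) {G : Finset ℕ} (hG : PotGen n r 𝒜 G) : 2 ≤ #G := by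
  by_contra! hlt
  rcases Nat.lt_or_ge #G 1 with h0 | h1
  · exact not_potGen_empty hn h𝒜 (card_eq_zero.1 (by omega : #G = 0) ▸ hG)
  · obtain ⟨x, rfl⟩ := card_eq_one.1 (by omega : #G = 1)
    have hgen : {x} ∈ canonGen n r 𝒜 := by
      classical
      refine mem_filter.2 ⟨mem_powerset.2 hG.1, hG, fun G' hG' hpot => ?_⟩
      rcases subset_singleton_iff.1 hG' with rfl | rfl
      · exact absurd hpot (not_potGen_empty hn h𝒜)
      · rfl
    have : rankFam n r 𝒜 ≤ 1 := Nat.sInf_le ⟨{x}, hgen, card_singleton x⟩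
    omega

lemma mem_canonGen_of_card_eq_two (hn : 2 * r ≤ n) (h𝒜 : IntersectingFam 𝒜)
    (hrank : 2 ≤ rankFam n r 𝒜) {G : Finset ℕ} (hG : PotGen n r 𝒜 G) (hcard : #G = 2) :
    G ∈ canonGen n r 𝒜 := by
  classical
  exact mem_filter.2 ⟨mem_powerset.2 hG.1, hG, fun _ hG' hpot =>
    eq_of_subset_of_card_le hG' (hcard ▸ two_le_card_of_potGen hn h𝒜 hrank hpot)⟩

lemma exists_one_notMem (hr : 1 ≤ r) (hn : 2 * r ≤ n) (h𝒜 : IsMLCIF n r 𝒜)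
    (hrank : 2 ≤ rankFam n r 𝒜) : ∃ B ∈ 𝒜, 1 ∉ B := by
  by_contra! h
  have hstar : starFam n r = 𝒜 :=
    h𝒜.2 _ (starFam_isLCIF n r) fun A hA => mem_filter.2 ⟨h𝒜.1.1 hA, h A hA⟩
  have hpot : PotGen n r 𝒜 {1} :=
    ⟨by simp only [singleton_subset_iff, mem_Icc]; omega,
      fun A hA h1 => hstar ▸ mem_filter.2 ⟨hA, singleton_subset_iff.1 h1⟩⟩
  simpa using two_le_card_of_potGen hn h𝒜.1.2.1 hrank hpot

end Generators

section Sparse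

variable {n r : ℕ} {𝒜 : Finset (Finset ℕ)}

lemma Ioc_one_mem_of_one_notMem (h𝒜 : IsLCIF n r 𝒜) (hn : r + 1 ≤ n) {B : Finset ℕ} (hB : B ∈ 𝒜)
    (h1B : 1 ∉ B) : Ioc 1 (1 + r) ∈ 𝒜 := by
  obtain ⟨hBn, rfl⟩ := mem_chooseFam.1 (h𝒜.1 hB)
  have hB1 : ∀ b ∈ B, 1 < b := fun b hb => by
    have := mem_Icc.1 (hBn hb)
    have : b ≠ 1 := ne_of_mem_of_not_mem hb h1B
    omega
  refine h𝒜.2.2 B hB _ (mem_chooseFam.2 ⟨fun x hx => ?_, by simp⟩) (domLE_Ioc_of_lt hB1)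
  simp only [mem_Ioc, mem_Icc] at hx ⊢
  omega

lemma Ioc_union_Ioc_mem_chooseFam {M : ℕ} (hr : 2 ≤ r) (hM : 3 ≤ M) (hn : M + (r - 2) ≤ n) :
    Ioc 1 3 ∪ Ioc M (M + (r - 2)) ∈ chooseFam n r := by
  refine mem_chooseFam.2 ⟨fun x hx => ?_, ?_⟩
  · simp only [mem_union, mem_Ioc, mem_Icc] at hx ⊢
    omega
  · rw [card_union_of_disjoint (Ioc_disjoint_Ioc_of_le hM), Nat.card_Ioc, Nat.card_Ioc]
    omega

lemma Ioc_union_Ioc_mem (h𝒜 : IsLCIF n r 𝒜) {M : ℕ} (hr : 2 ≤ r) (hM : 3 ≤ M)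
    (hn : M + (r - 2) ≤ n) {B : Finset ℕ} (hB : B ∈ 𝒜) (h1B : 1 ∉ B)
    (hsparse : countLE B M ≤ 2) : Ioc 1 3 ∪ Ioc M (M + (r - 2)) ∈ 𝒜 := by
  obtain ⟨hBn, hBr⟩ := mem_chooseFam.1 (h𝒜.1 hB)
  have hhigh : r - 2 ≤ #{x ∈ B | ¬ x ≤ M} := by
    have := card_filter_add_card_filter_not (s := B) (· ≤ M)
    unfold countLE at hsparse
    omega
  obtain ⟨D, hDB, hD⟩ := exists_subset_card_eq hhigh
  have hPD : B \ D ∪ D = B := sdiff_union_of_subset (hDB.trans (filter_subset _ _))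
  have hP : #(B \ D) = 2 := by
    rw [card_sdiff_of_subset (hDB.trans (filter_subset _ _)), hD, hBr]
    omega
  have hP1 : ∀ b ∈ B \ D, 1 < b := fun b hb => by
    have hb := (mem_sdiff.1 hb).1
    have := mem_Icc.1 (hBn hb)
    have : b ≠ 1 := ne_of_mem_of_not_mem hb h1B
    omega
  have hDM : ∀ b ∈ D, M < b := fun b hb => by simpa using (mem_filter.1 (hDB hb)).2
  have hdom : DomLE (Ioc 1 (1 + #(B \ D)) ∪ Ioc M (M + #D)) (B \ D ∪ D) :=
    (domLE_Ioc_of_lt hP1).union (domLE_Ioc_of_lt hDM) (Ioc_disjoint_Ioc_of_le (by omega))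
      sdiff_disjoint
  rw [hP, hD, hPD] at hdom
  exact h𝒜.2.2 B hB _ (Ioc_union_Ioc_mem_chooseFam hr hM hn) hdom

lemma two_le_countLE_three (h𝒜 : IsLCIF n r 𝒜) {M : ℕ} (hr : 2 ≤ r) (hM : 2 * r + 1 ≤ M)
    (hn : M ≤ n) (hS : Ioc 1 3 ∪ Ioc M (M + (r - 2)) ∈ 𝒜) {C : Finset ℕ}
    (hC : C ∈ 𝒜) : 2 ≤ countLE C 3 := by
  by_contra! hlt
  obtain ⟨hCn, hCr⟩ := mem_chooseFam.1 (h𝒜.1 hC)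
  have hlow := le_card_sdiff {x ∈ C | x ≤ 3} (Icc 1 3)
  have hmid := le_card_sdiff C (Icc 4 M)
  rw [Nat.card_Icc] at hlow hmid
  obtain ⟨P, hPsub, hP⟩ := exists_subset_card_eq (show 2 ≤ #(Icc 1 3 \ {x ∈ C | x ≤ 3}) by
    unfold countLE at hlt; omega)
  obtain ⟨D, hDsub, hD⟩ := exists_subset_card_eq (show r - 2 ≤ #(Icc 4 M \ C) by omega)
  have hP3 : ∀ x ∈ P, 1 ≤ x ∧ x ≤ 3 ∧ x ∉ C := fun x hx => by
    have := mem_sdiff.1 (hPsub hx)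
    simp only [mem_Icc, mem_filter, not_and] at this
    exact ⟨this.1.1, this.1.2, fun hxC => this.2 hxC this.1.2⟩
  have hD4 : ∀ x ∈ D, 4 ≤ x ∧ x ≤ M ∧ x ∉ C := fun x hx => by
    have := mem_sdiff.1 (hDsub hx)
    simp only [mem_Icc] at this
    exact ⟨this.1.1, this.1.2, this.2⟩
  have hPD : Disjoint P D := disjoint_left.2 fun x hxP hxD => by
    have := hP3 x hxP; have := hD4 x hxD; omega
  have hdomP : DomLE P (Ioc 1 3) := by
    simpa [hP] using domLE_Ioc_of_le (fun x hx => (hP3 x hx).2.1) (by omega)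
  have hdomD : DomLE D (Ioc M (M + (r - 2))) :=
    domLE_of_forall_le (by simp [hD]) fun x hx y hy => by
      have := hD4 x hx; have := mem_Ioc.1 hy; omega
  have hmem : P ∪ D ∈ chooseFam n r := by
    refine mem_chooseFam.2 ⟨union_subset (fun x hx => ?_) (fun x hx => ?_), ?_⟩
    · have := hP3 x hx; simp only [mem_Icc]; omega
    · have := hD4 x hx; simp only [mem_Icc]; omega
    · rw [card_union_of_disjoint hPD, hP, hD]; omega
  have hPDA := h𝒜.2.2 _ hS _ hmem
    (hdomP.union hdomD hPD (Ioc_disjoint_Ioc_of_le (by omega)))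
  obtain ⟨x, hx⟩ := h𝒜.2.1 _ hPDA _ hC
  rcases mem_union.1 (mem_inter.1 hx).1 with hxP | hxD
  · exact (hP3 x hxP).2.2 (mem_inter.1 hx).2
  · exact (hD4 x hxD).2.2 (mem_inter.1 hx).2

lemma three_le_countLE_of_one_notMem (h𝒜 : IsMLCIF n r 𝒜) (hr : 2 ≤ r) (hn : 3 * r ≤ n)
    (hrank : 2 ≤ rankFam n r 𝒜) (hgen : ∀ G ∈ canonGen n r 𝒜, #G = 2 → 1 ∈ G)
    {B : Finset ℕ} (hB : B ∈ 𝒜) (h1B : 1 ∉ B) : 3 ≤ countLE B (2 * r + 1) := by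
  by_contra! hsparse
  have hS := Ioc_union_Ioc_mem h𝒜.1 (M := 2 * r + 1) hr (by omega) (by omega) hB h1B (by omega)
  have hfam : twoOfThreeFam n r = 𝒜 := h𝒜.2 _ (twoOfThreeFam_isLCIF n r) fun C hC =>
    mem_filter.2 ⟨h𝒜.1.1 hC, two_le_countLE_three h𝒜.1 hr le_rfl (by omega) hS hC⟩
  have hpot : PotGen n r 𝒜 {2, 3} := by
    refine ⟨by simp only [insert_subset_iff, singleton_subset_iff, mem_Icc]; omega,
      fun A hA h23 => hfam ▸ mem_filter.2 ⟨hA, ?_⟩⟩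
    calc 2 = #({2, 3} : Finset ℕ) := rfl
      _ ≤ countLE A 3 := card_le_card fun x hx => by
        simp only [mem_insert, mem_singleton] at hx
        exact mem_filter.2 ⟨h23 (by simp [hx]), by omega⟩
  have := hgen _ (mem_canonGen_of_card_eq_two (by omega) h𝒜.1.2.1 hrank hpot rfl) rfl
  simp at this

end Sparse

lemma card_filter_superset_powersetCard_le {α : Type*} [DecidableEq α] (S T : Finset α) (r : ℕ) :
    #{B ∈ S.powersetCard r | T ⊆ B} ≤ (#S).choose (r - #T) := by
  rw [← card_powersetCard]
  refine card_le_card_of_injOn (· \ T) (fun B hB => ?_) fun B₁ hB₁ B₂ hB₂ h => ?_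
  · obtain ⟨hBr, hTB⟩ := mem_filter.1 hB
    obtain ⟨hBS, rfl⟩ := mem_powersetCard.1 hBr
    exact mem_powersetCard.2 ⟨sdiff_subset.trans hBS, card_sdiff_of_subset hTB⟩
  · rw [← sdiff_union_of_subset (mem_filter.1 hB₁).2, ← sdiff_union_of_subset (mem_filter.1 hB₂).2]
    exact congrArg (· ∪ T) h

lemma card_le_of_three_le_countLE {n r M : ℕ} {𝒯 : Finset (Finset ℕ)} (h𝒯 : 𝒯 ⊆ chooseFam n r)
    (h : ∀ B ∈ 𝒯, 3 ≤ countLE B M) : #𝒯 ≤ M.choose 3 * n.choose (r - 3) := by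
  have hcover : 𝒯 ⊆ ((Icc 1 M).powersetCard 3).biUnion fun T => {B ∈ chooseFam n r | T ⊆ B} := by
    intro B hB
    obtain ⟨T, hT, hT3⟩ := exists_subset_card_eq (h B hB)
    have hTM : T ⊆ Icc 1 M := fun x hx => by
      have hx := mem_filter.1 (hT hx)
      have := mem_Icc.1 ((mem_chooseFam.1 (h𝒯 hB)).1 hx.1)
      exact mem_Icc.2 ⟨this.1, hx.2⟩
    exact mem_biUnion.2 ⟨T, mem_powersetCard.2 ⟨hTM, hT3⟩,
      mem_filter.2 ⟨h𝒯 hB, hT.trans (filter_subset _ _)⟩⟩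
  refine (card_le_card hcover).trans (card_biUnion_le_card_mul _ _ _ fun T hT => ?_)
  |>.trans_eq (by rw [card_powersetCard, Nat.card_Icc, Nat.add_sub_cancel])
  have := card_filter_superset_powersetCard_le (Icc 1 n) T r
  rwa [(mem_powersetCard.1 hT).2, Nat.card_Icc, Nat.add_sub_cancel] at this

lemma card_sdiff_starFam_le {n r : ℕ} {𝒜 : Finset (Finset ℕ)} (h𝒜 : IsMLCIF n r 𝒜)
    (hr : 2 ≤ r) (hn : 3 * r ≤ n) (hrank : 2 ≤ rankFam n r 𝒜)
    (hgen : ∀ G ∈ canonGen n r 𝒜, #G = 2 → 1 ∈ G) :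
    #(𝒜 \ starFam n r) ≤ (2 * r + 1).choose 3 * n.choose (r - 3) :=
  card_le_of_three_le_countLE (sdiff_subset.trans h𝒜.1.1) fun _ hC =>
    have hC𝒜 := (mem_sdiff.1 hC).1
    three_le_countLE_of_one_notMem h𝒜 hr hn hrank hgen hC𝒜 fun h1 =>
      (mem_sdiff.1 hC).2 (mem_filter.2 ⟨h𝒜.1.1 hC𝒜, h1⟩)

lemma choose_le_hit_starFam_sdiff {n r x₀ : ℕ} {𝒜 : Finset (Finset ℕ)} {X B₀ : Finset ℕ}
    (hr : 2 ≤ r) (h𝒜 : IntersectingFam 𝒜) (hB₀ : B₀ ∈ 𝒜) (hB₀n : B₀ ∈ chooseFam n r)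
    (h1B₀ : 1 ∉ B₀) (hx₀B₀ : x₀ ∉ B₀) (hx₀ : x₀ ∈ Icc 2 n) (hx₀X : x₀ ∈ X) :
    (n - (r + 2)).choose (r - 2) ≤ hit X (starFam n r \ 𝒜) := by
  obtain ⟨hB₀sub, hB₀r⟩ := mem_chooseFam.1 hB₀n
  have hx₀' := mem_Icc.1 hx₀
  set U : Finset ℕ := {1, x₀}
  have hU : U ⊆ Icc 1 n := by simp only [U, insert_subset_iff, singleton_subset_iff, mem_Icc]; omega
  have hUB₀ : Disjoint U B₀ := by simp [U, h1B₀, hx₀B₀]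
  have hbase : #(Icc 1 n \ (U ∪ B₀)) = n - (r + 2) := by
    rw [card_sdiff_of_subset (union_subset hU hB₀sub), card_union_of_disjoint hUB₀,
      card_pair (by omega), hB₀r, Nat.card_Icc]
    omega
  have hdisj : ∀ S ∈ (Icc 1 n \ (U ∪ B₀)).powersetCard (r - 2), Disjoint U S ∧ Disjoint S B₀ :=
    fun S hS => by
      have := disjoint_union_right.1
        (disjoint_of_subset_left (mem_powersetCard.1 hS).1 sdiff_disjoint)
      exact ⟨this.1.symm, this.2⟩
  rw [hit, ← hbase, ← card_powersetCard]
  refine card_le_card_of_injOn (U ∪ ·) (fun S hS => ?_) fun S₁ hS₁ S₂ hS₂ h => ?_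
  · obtain ⟨hSsub, hS⟩ := mem_powersetCard.1 hS
    obtain ⟨hUS, hSB₀⟩ := hdisj S (mem_powersetCard.2 ⟨hSsub, hS⟩)
    have hmem : U ∪ S ∈ chooseFam n r := mem_chooseFam.2
      ⟨union_subset hU (hSsub.trans sdiff_subset), by
        rw [card_union_of_disjoint hUS, hS, card_pair (by omega)]; omega⟩
    have hnotMem : U ∪ S ∉ 𝒜 := fun hUS𝒜 => by
      obtain ⟨x, hx⟩ := h𝒜 _ hUS𝒜 _ hB₀
      exact disjoint_left.1 (disjoint_union_left.2 ⟨hUB₀, hSB₀⟩) (mem_inter.1 hx).1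
        (mem_inter.1 hx).2
    refine mem_filter.2 ⟨mem_sdiff.2 ⟨mem_filter.2 ⟨hmem, by simp [U]⟩, hnotMem⟩,
      ⟨x₀, mem_inter.2 ⟨by simp [U], hx₀X⟩⟩⟩
  · rw [← union_sdiff_cancel_left (hdisj S₁ hS₁).1, ← union_sdiff_cancel_left (hdisj S₂ hS₂).1]
    exact congrArg (· \ U) h

open Nat in
/-- With `q = m + 1 - t`, the left side is at most `c (2q)^(t-1)` and the right side at least
`q^t / t!`. -/
lemma mul_choose_lt_choose {c t n m : ℕ} (ht : 1 ≤ t) (hn : n ≤ 2 * (m + 1 - t))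
    (hbig : t ! * c * 2 ^ (t - 1) < m + 1 - t) : c * n.choose (t - 1) < m.choose t := by
  set q := m + 1 - t
  have hq : q ^ t = q * q ^ (t - 1) := by rw [← pow_succ']; congr 1; omega
  refine Nat.lt_of_mul_lt_mul_left (a := t !) ?_
  calc t ! * (c * n.choose (t - 1)) ≤ t ! * c * (2 * q) ^ (t - 1) := by
        rw [← mul_assoc]
        exact Nat.mul_le_mul_left _ ((choose_le_pow _ _).trans (Nat.pow_le_pow_left hn _))
    _ = t ! * c * 2 ^ (t - 1) * q ^ (t - 1) := by ring
    _ < q * q ^ (t - 1) := Nat.mul_lt_mul_of_pos_right hbig (pow_pos (by omega) _)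
    _ ≤ t ! * m.choose t := by
        rw [← hq, ← descFactorial_eq_factorial_mul_choose]
        exact pow_sub_le_descFactorial m t

lemma hit_eq_hit_inter_add_hit_sdiff (X : Finset ℕ) (𝒜 ℬ : Finset (Finset ℕ)) :
    hit X 𝒜 = hit X (𝒜 ∩ ℬ) + hit X (𝒜 \ ℬ) := by
  unfold hit
  rw [← card_union_of_disjoint (disjoint_filter_filter (disjoint_sdiff_inter 𝒜 ℬ).symm),
    ← filter_union, union_comm, sdiff_union_inter]

/-- For `r ≥ 3` and `n` sufficiently large: for every nonempty
`X ⊆ [2,n]` with `X ⊄ [2, r+1]`, and every MLCIF `𝒜 ∈ ⋃_{j=2}^{r+1} I_j`,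
we have `hit_X(𝒮) > hit_X(𝒜)`. -/
theorem stmt14 :
    ∀ r : ℕ, 3 ≤ r → ∃ N : ℕ, ∀ n : ℕ, N ≤ n →
      ∀ X : Finset ℕ, X ⊆ Finset.Icc 2 n → X.Nonempty →
        ¬ X ⊆ Finset.Icc 2 (r + 1) →
        ∀ 𝒜 : Finset (Finset ℕ), (∃ j : ℕ, 2 ≤ j ∧ j ≤ r + 1 ∧ MemI n r j 𝒜) →
          hit X 𝒜 < hit X (starFam n r) := by
  intro r hr
  refine ⟨(r - 2).factorial * (2 * r + 1).choose 3 * 2 ^ (r - 2 - 1) + 4 * r, ?_⟩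
  intro n hn X hX _ hXr 𝒜 ⟨_, _, _, h𝒜, hrank, hgen2⟩
  have hgen : ∀ G ∈ canonGen n r 𝒜, #G = 2 → 1 ∈ G := fun G hG hG2 => by
    obtain ⟨i, -, rfl⟩ := mem_image.1 (hgen2 ▸ mem_filter.2 ⟨hG, hG2⟩)
    exact mem_insert_self 1 _
  obtain ⟨x₀, hx₀X, hx₀r⟩ := not_subset.1 hXr
  obtain ⟨B, hB, h1B⟩ := exists_one_notMem (by omega) (by omega) h𝒜 hrank.ge
  have hI := Ioc_one_mem_of_one_notMem h𝒜.1 (by omega) hB h1B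
  have hx₀I : x₀ ∉ Ioc 1 (1 + r) := fun h => hx₀r (by simp only [mem_Ioc, mem_Icc] at h ⊢; omega)
  have hlarge := mul_choose_lt_choose (c := (2 * r + 1).choose 3) (t := r - 2) (n := n)
    (m := n - (r + 2)) (by omega) (by omega) (by omega)
  rw [show r - 2 - 1 = r - 3 by omega] at hlarge
  set 𝒮 := starFam n r
  calc hit X 𝒜 = hit X (𝒮 ∩ 𝒜) + hit X (𝒜 \ 𝒮) := by
        rw [hit_eq_hit_inter_add_hit_sdiff X 𝒜 𝒮, inter_comm]
    _ ≤ hit X (𝒮 ∩ 𝒜) + #(𝒜 \ 𝒮) := Nat.add_le_add_left (card_filter_le _ _) _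
    _ < hit X (𝒮 ∩ 𝒜) + hit X (𝒮 \ 𝒜) := Nat.add_lt_add_left
        ((card_sdiff_starFam_le h𝒜 (by omega) (by omega) hrank.ge hgen).trans_lt
          (hlarge.trans_le (choose_le_hit_starFam_sdiff (by omega) h𝒜.1.2.1 hI (h𝒜.1.1 hI)
            (by simp) hx₀I (hX hx₀X) hx₀X))) _
    _ = hit X 𝒮 := (hit_eq_hit_inter_add_hit_sdiff X 𝒮 𝒜).symm
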